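/- Let x(τ) solve the scalar Riccati-type ODE x' + x = x² + c(τ) on [τ₀, ∞), where 0 ≤ c(τ) ≤ ε e^{−τ} and 0 ≤ x(τ₀) ≤ ε with ε small. Then x(τ) stays nonnegative and satisfies x(τ) ≤ C ε e^{−(1−δ)τ} for any fixed 0 < δ < 1 and sufficiently small ε, with C depending on δ and τ₀. -/

import Mathlib

/-!
The substitution `y = e^τ x` turns the equation into `y' = e^τ (x² + c) ≥ 0`, so `x` stays
nonnegative. For the upper bound, `B(τ) = C ε e^{-(1-δ)τ}` is a strict supersolution once
`C` is large and `ε` small: where `x` touches `B` one needs `B² + c < δ B`, and both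
`B² ≤ (δ/2) B` (as `B ≤ δ/2`) and `c ≤ ε e^{-δτ₀} e^{-(1-δ)τ} < (δ/2) B` (as `2 e^{-δτ₀} < δ C`).
The fencing theorem then keeps `x` below `B`.
-/

open Set Real

theorem nonneg_of_hasDerivAt_add_self_nonneg {x x' : ℝ → ℝ} {τ₀ : ℝ}
    (hx : ∀ τ ∈ Ici τ₀, HasDerivAt x (x' τ) τ) (hx' : ∀ τ ∈ Ici τ₀, 0 ≤ x' τ + x τ)
    (h₀ : 0 ≤ x τ₀) : ∀ τ ∈ Ici τ₀, 0 ≤ x τ := by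
  have hy : ∀ τ ∈ Ici τ₀,
      HasDerivAt (fun s => exp s * x s) (exp τ * (x' τ + x τ)) τ := fun τ hτ =>
    ((hasDerivAt_exp τ).mul (hx τ hτ)).congr_deriv (by ring)
  have hmono : MonotoneOn (fun s => exp s * x s) (Ici τ₀) := by
    refine monotoneOn_of_hasDerivWithinAt_nonneg (convex_Ici τ₀)
      (fun τ hτ => (hy τ hτ).continuousAt.continuousWithinAt)
      (fun τ hτ => (hy τ (interior_subset hτ)).hasDerivWithinAt) fun τ hτ => ?_
    exact mul_nonneg (exp_pos τ).le (hx' τ (interior_subset hτ))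
  intro τ hτ
  have hy₀ : 0 ≤ exp τ₀ * x τ₀ := mul_nonneg (exp_pos τ₀).le h₀
  exact nonneg_of_mul_nonneg_right (hy₀.trans (hmono self_mem_Ici hτ hτ)) (exp_pos τ)

theorem le_of_hasDerivAt_lt_deriv_boundary {x x' B B' : ℝ → ℝ} {τ₀ : ℝ}
    (hx : ∀ τ ∈ Ici τ₀, HasDerivAt x (x' τ) τ) (hB : ∀ τ, HasDerivAt B (B' τ) τ)
    (h₀ : x τ₀ ≤ B τ₀) (bound : ∀ τ ∈ Ici τ₀, x τ = B τ → x' τ < B' τ) :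
    ∀ τ ∈ Ici τ₀, x τ ≤ B τ := fun _ hτ =>
  image_le_of_deriv_right_lt_deriv_boundary
    (fun s hs => (hx s hs.1).continuousAt.continuousWithinAt)
    (fun s hs => (hx s hs.1).hasDerivWithinAt) h₀ hB
    (fun s hs => bound s hs.1) ⟨hτ, le_rfl⟩

theorem exp_neg_le_exp_mul_exp {δ τ₀ τ : ℝ} (hδ : 0 ≤ δ) (hτ : τ₀ ≤ τ) :
    exp (-τ) ≤ exp (-δ * τ₀) * exp (-(1 - δ) * τ) := by
  rw [← exp_add, exp_le_exp]
  nlinarith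

theorem riccati_le_exp_barrier {δ τ₀ C ε : ℝ} {x c : ℝ → ℝ} (hδ1 : δ ≤ 1)
    (hC₀ : 1 ≤ C * exp (-(1 - δ) * τ₀)) (hCδ : 2 * exp (-δ * τ₀) < δ * C) (hε : 0 < ε)
    (hεC : 2 * C * ε * exp (-(1 - δ) * τ₀) ≤ δ)
    (hx : ∀ τ ∈ Ici τ₀, HasDerivAt x (x τ ^ 2 + c τ - x τ) τ)
    (hc : ∀ τ ∈ Ici τ₀, c τ ≤ ε * exp (-τ)) (hxε : x τ₀ ≤ ε) :
    ∀ τ ∈ Ici τ₀, x τ ≤ C * ε * exp (-(1 - δ) * τ) := by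
  have hC : 0 < C := pos_of_mul_pos_left (one_pos.trans_le hC₀) (exp_pos _).le
  have hδ : 0 ≤ δ := nonneg_of_mul_nonneg_left ((by positivity : (0 : ℝ) ≤ _).trans hCδ.le) hC
  refine le_of_hasDerivAt_lt_deriv_boundary hx
    (fun τ => (((hasDerivAt_id τ).const_mul (-(1 - δ))).exp.const_mul (C * ε)))
    (by nlinarith) fun τ hτ hxτ => ?_
  simp only [id, mul_one]
  set e := exp (-(1 - δ) * τ)
  have he : 0 < e := exp_pos _
  have he₀ : e ≤ exp (-(1 - δ) * τ₀) := exp_le_exp.2 (by nlinarith [mem_Ici.1 hτ])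
  have hcτ : c τ ≤ ε * exp (-δ * τ₀) * e :=
    calc c τ ≤ ε * exp (-τ) := hc τ hτ
      _ ≤ ε * (exp (-δ * τ₀) * e) := by gcongr; exact exp_neg_le_exp_mul_exp hδ hτ
      _ = ε * exp (-δ * τ₀) * e := by ring
  have hεe : 0 < ε * e := mul_pos hε he
  have hB : 2 * (C * ε * e) ≤ δ := by
    nlinarith [mul_le_mul_of_nonneg_left he₀ (by positivity : 0 ≤ 2 * C * ε)]
  rw [hxτ]
  nlinarith [mul_le_mul_of_nonneg_right hB (by positivity : 0 ≤ C * ε * e),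
    mul_lt_mul_of_pos_right hCδ hεe]

/-- Decay for the Riccati-type ODE `x' + x = x² + c(τ)` with `0 ≤ c(τ) ≤ ε e^{−τ}`
and `0 ≤ x(τ₀) ≤ ε`: for any fixed `0 < δ < 1` there are `ε₀ > 0` and `C > 0`
(depending on `δ` and `τ₀`) such that for all `0 < ε ≤ ε₀` the solution stays
nonnegative and satisfies `x(τ) ≤ C ε e^{−(1−δ)τ}`. -/
theorem riccati_decay (τ₀ δ : ℝ) (hδ0 : 0 < δ) (hδ1 : δ < 1) :
    ∃ ε₀ : ℝ, 0 < ε₀ ∧ ∃ C : ℝ, 0 < C ∧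
      ∀ (ε : ℝ) (x c : ℝ → ℝ), 0 < ε → ε ≤ ε₀ →
        (∀ τ ∈ Set.Ici τ₀, HasDerivAt x (x τ ^ 2 + c τ - x τ) τ) →
        (∀ τ ∈ Set.Ici τ₀, 0 ≤ c τ ∧ c τ ≤ ε * Real.exp (-τ)) →
        0 ≤ x τ₀ → x τ₀ ≤ ε →
        ∀ τ ∈ Set.Ici τ₀, 0 ≤ x τ ∧ x τ ≤ C * ε * Real.exp (-(1 - δ) * τ) := by
  set C := 2 * exp (-δ * τ₀) / δ + exp ((1 - δ) * τ₀)
  have hC₀ : 1 ≤ C * exp (-(1 - δ) * τ₀) := by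
    rw [add_mul, ← exp_add, show (1 - δ) * τ₀ + -(1 - δ) * τ₀ = 0 by ring, exp_zero]
    exact le_add_of_nonneg_left (by positivity)
  have hCδ : 2 * exp (-δ * τ₀) < δ * C := by
    rw [mul_add, mul_div_cancel₀ _ hδ0.ne']
    exact lt_add_of_pos_right _ (by positivity)
  refine ⟨δ / (2 * C * exp (-(1 - δ) * τ₀)), by positivity, C, by positivity, ?_⟩
  intro ε x c hε hεε₀ hx hc hx₀ hxε τ hτ
  have hεC : 2 * C * ε * exp (-(1 - δ) * τ₀) ≤ δ := by
    rw [le_div_iff₀ (by positivity)] at hεε₀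
    linarith
  refine ⟨nonneg_of_hasDerivAt_add_self_nonneg hx (fun s hs => ?_) hx₀ τ hτ,
    riccati_le_exp_barrier hδ1.le hC₀ hCδ hε hεC hx (fun s hs => (hc s hs).2) hxε τ hτ⟩
  nlinarith [(hc s hs).1, sq_nonneg (x s)]
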